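/- Let p ≥ 2 be a prime number and let h_{i,1} = ((i−p)² − (p−1)²)/(4p) ∈ ℚ for integers i. For i ≠ j with i, j ∈ {1, …, p} ∪ {2p, …, 3p−1}, the difference h_{i,1} − h_{j,1} is an integer if and only if |i − j| = 2p (equivalently, if and only if i − j = 2p with 1 ≤ j ≤ p−1, or j − i = 2p with 1 ≤ i ≤ p−1). -/
import Mathlib

/-- The conformal weight `h_{i,1} = ((i−p)² − (p−1)²)/(4p)` as a rational number. -/
def hwt (p i : ℕ) : ℚ :=
  (((i : ℚ) - p)^2 - ((p : ℚ) - 1)^2) / (4*p)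

lemma div_int_iff' (A d : ℤ) (hd : d ≠ 0) :
    (∃ n : ℤ, (A:ℚ)/(d:ℚ) = n) ↔ d ∣ A := by
  constructor
  · rintro ⟨n, hn⟩
    rw [div_eq_iff (by exact_mod_cast hd)] at hn
    exact ⟨n, by exact_mod_cast hn.trans (mul_comm _ _)⟩
  · rintro ⟨n, rfl⟩
    exact ⟨n, by push_cast; field_simp⟩

lemma key_odd (p i j : ℤ) (hp : Prime p) (hodd : p % 2 = 1) (hp3 : 3 ≤ p)
    (hi : (1 ≤ i ∧ i ≤ p) ∨ (2*p ≤ i ∧ i ≤ 3*p-1))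
    (hj : (1 ≤ j ∧ j ≤ p) ∨ (2*p ≤ j ∧ j ≤ 3*p-1))
    (hij : i ≠ j)
    (h : 4*p ∣ (i-j)*(i+j-2*p)) : |i - j| = 2*p := by
  have hp0 : p ≠ 0 := by omega
  have hpab : p ∣ (i-j)*(i+j-2*p) := dvd_trans ⟨4, by ring⟩ h
  obtain ⟨m, hm⟩ := h
  rcases hi with ⟨hi1, hi2⟩ | ⟨hi1, hi2⟩ <;> rcases hj with ⟨hj1, hj2⟩ | ⟨hj1, hj2⟩
  · -- both low
    exfalso
    rcases hp.dvd_mul.mp hpab with ⟨k, hk⟩ | ⟨k, hk⟩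
    · rcases lt_trichotomy k 0 with h' | h' | h'
      · have h'' : k ≤ -1 := by omega
        nlinarith
      · subst h'; simp at hk; omega
      · have h'' : 1 ≤ k := by omega
        nlinarith
    · have hb1 : 2 - 2*p ≤ i + j - 2*p := by omega
      have hb2 : i + j - 2*p ≤ -1 := by omega
      have hk1 : k = -1 := by
        rcases lt_trichotomy k (-1) with h' | h' | h'
        · exfalso; have h'' : k ≤ -2 := by omega
          nlinarith
        · exact h'
        · exfalso; have h'' : 0 ≤ k := by omega
          nlinarith
      subst hk1
      have h2 : p * ((i - j) + 4*m) = 0 := by linear_combination -hm + (i-j) * hk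
      rcases mul_eq_zero.mp h2 with h' | h' <;> omega
  · -- i low, j high
    rcases hp.dvd_mul.mp hpab with ⟨k, hk⟩ | ⟨k, hk⟩
    · have hb1 : i - j ≤ -p := by omega
      have hb2 : -(3*p) + 2 ≤ i - j := by omega
      have hk1 : -2 ≤ k := by
        by_contra hc; push_neg at hc; have h'' : k ≤ -3 := by omega
        nlinarith
      have hk2 : k ≤ -1 := by
        by_contra hc; push_neg at hc; have h'' : 0 ≤ k := by omega
        nlinarith
      interval_cases k
      · have h3 : i - j = -(2*p) := by omega
        rw [h3, abs_neg]
        exact abs_of_nonneg (by linarith)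
      · exfalso
        have h2 : p * ((i + j - 2*p) + 4*m) = 0 := by
          linear_combination -hm + (i+j-2*p) * hk
        rcases mul_eq_zero.mp h2 with h' | h' <;> omega
    · exfalso
      have hb1 : 1 ≤ i + j - 2*p := by omega
      have hb2 : i + j - 2*p ≤ 2*p - 1 := by omega
      have hk1 : k = 1 := by
        rcases lt_trichotomy k 1 with h' | h' | h'
        · exfalso; have h'' : k ≤ 0 := by omega
          nlinarith
        · exact h'
        · exfalso; have h'' : 2 ≤ k := by omega
          nlinarith
      subst hk1
      have h2 : p * ((i - j) - 4*m) = 0 := by linear_combination hm - (i-j) * hk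
      rcases mul_eq_zero.mp h2 with h' | h' <;> omega
  · -- i high, j low
    rcases hp.dvd_mul.mp hpab with ⟨k, hk⟩ | ⟨k, hk⟩
    · have hb1 : p ≤ i - j := by omega
      have hb2 : i - j ≤ 3*p - 2 := by omega
      have hk1 : 1 ≤ k := by
        by_contra hc; push_neg at hc; have h'' : k ≤ 0 := by omega
        nlinarith
      have hk2 : k ≤ 2 := by
        by_contra hc; push_neg at hc; have h'' : 3 ≤ k := by omega
        nlinarith
      interval_cases k
      · exfalso
        have h2 : p * ((i + j - 2*p) - 4*m) = 0 := by
          linear_combination hm - (i+j-2*p) * hk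
        rcases mul_eq_zero.mp h2 with h' | h' <;> omega
      · have h3 : i - j = 2*p := by omega
        rw [h3]
        exact abs_of_nonneg (by linarith)
    · exfalso
      have hb1 : 1 ≤ i + j - 2*p := by omega
      have hb2 : i + j - 2*p ≤ 2*p - 1 := by omega
      have hk1 : k = 1 := by
        rcases lt_trichotomy k 1 with h' | h' | h'
        · exfalso; have h'' : k ≤ 0 := by omega
          nlinarith
        · exact h'
        · exfalso; have h'' : 2 ≤ k := by omega
          nlinarith
      subst hk1
      have h2 : p * ((i - j) - 4*m) = 0 := by linear_combination hm - (i-j) * hk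
      rcases mul_eq_zero.mp h2 with h' | h' <;> omega
  · -- both high
    exfalso
    rcases hp.dvd_mul.mp hpab with ⟨k, hk⟩ | ⟨k, hk⟩
    · rcases lt_trichotomy k 0 with h' | h' | h'
      · have h'' : k ≤ -1 := by omega
        nlinarith
      · subst h'; simp at hk; omega
      · have h'' : 1 ≤ k := by omega
        nlinarith
    · have hb1 : 2*p + 1 ≤ i + j - 2*p := by omega
      have hb2 : i + j - 2*p ≤ 4*p - 2 := by omega
      have hk1 : k = 3 := by
        rcases lt_trichotomy k 3 with h' | h' | h'
        · exfalso; have h'' : k ≤ 2 := by omega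
          nlinarith
        · exact h'
        · exfalso; have h'' : 4 ≤ k := by omega
          nlinarith
      subst hk1
      have h2 : p * (3*(i - j) - 4*m) = 0 := by linear_combination hm - (i-j) * hk
      rcases mul_eq_zero.mp h2 with h' | h' <;> omega

theorem stmt_8 (p : ℕ) (hp : p.Prime) (hp2 : 2 ≤ p) (i j : ℕ)
    (hi : i ∈ Finset.Icc 1 p ∪ Finset.Icc (2*p) (3*p - 1))
    (hj : j ∈ Finset.Icc 1 p ∪ Finset.Icc (2*p) (3*p - 1))
    (hij : i ≠ j) :
    (∃ n : ℤ, hwt p i - hwt p j = (n : ℚ)) ↔ |(i : ℤ) - j| = 2*p := by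
  simp only [Finset.mem_union, Finset.mem_Icc] at hi hj
  have hp0 : (p:ℚ) ≠ 0 := Nat.cast_ne_zero.mpr (by omega)
  have hd0 : (4*(p:ℤ)) ≠ 0 := by
    have : (0:ℤ) < p := by exact_mod_cast Nat.pos_of_ne_zero (by omega)
    positivity
  have hdiff : hwt p i - hwt p j
      = ((((i:ℤ)-j)*((i:ℤ)+j-2*p) : ℤ) : ℚ) / ((4*(p:ℤ) : ℤ) : ℚ) := by
    unfold hwt
    push_cast
    field_simp
    ring
  rw [hdiff, div_int_iff' _ _ hd0]
  constructor
  · intro h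
    rcases hp.eq_two_or_odd' with rfl | hoddp
    · -- p = 2 : finite check
      norm_num at hi hj h ⊢
      rcases hi with ⟨hi1, hi2⟩ | ⟨hi1, hi2⟩ <;> rcases hj with ⟨hj1, hj2⟩ | ⟨hj1, hj2⟩ <;>
        interval_cases i <;> interval_cases j <;> simp_all <;> omega
    · have h1 : p % 2 = 1 := Nat.odd_iff.mp hoddp
      have hodd : (p:ℤ) % 2 = 1 := by omega
      have hp3 : 3 ≤ (p:ℤ) := by omega
      exact key_odd p i j (Nat.prime_iff_prime_int.mp hp) hodd hp3 (by omega) (by omega)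
        (by omega) h
  · intro habs
    rcases abs_eq (by positivity : (0:ℤ) ≤ 2*p) |>.mp habs with h' | h'
    · exact ⟨j, by linear_combination ((i:ℤ) + j) * h'⟩
    · exact ⟨-(i:ℤ), by linear_combination ((i:ℤ) + j) * h'⟩
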